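/- Let μ : A* → A* be a substitution and u a right-infinite fixed point of μ with growing seed a. The Dumont–Thomas numeration system over ℕ associated with μ, u and r = 0 is positional if and only if the map c ↦ |μ^ℓ(c)| is constant over the set E_μ of non-final letters of μ for every ℓ ≥ 0; in that case the weights are U_ℓ = |μ^ℓ(a)|. -/

import Mathlib

/-- `substApp μ n w` is `μ^n(w)`: the `n`-fold application of the substitution `μ`
(extended to words by concatenation) to the word `w`. -/
def substApp {A : Type*} (μ : A → List A) (n : ℕ) (w : List A) : List A :=
  (fun v => v.flatMap μ)^[n] w

/-- A sequence `((m_i, a_i))_{i=0,...,k-1}` is admissible with respect to `μ` if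
`m_{i-1} a_{i-1}` is a prefix of `μ(a_i)` for every `1 ≤ i ≤ k-1`. -/
def Admissible {A : Type*} (μ : A → List A) (k : ℕ) (s : Fin k → List A × A) : Prop :=
  ∀ i : Fin k, 0 < i.val →
    ((s ⟨i.val - 1, by have := i.isLt; omega⟩).1 ++
      [(s ⟨i.val - 1, by have := i.isLt; omega⟩).2]) <+: μ (s i).2

/-- A sequence `((m_i, a_i))_{i=0,...,k-1}` is `a`-admissible with respect to `μ`
if it is admissible and moreover `m_{k-1} a_{k-1}` is a prefix of `μ(a)`. -/
def LetterAdmissible {A : Type*} (μ : A → List A) (a : A) (k : ℕ)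
    (s : Fin k → List A × A) : Prop :=
  Admissible μ k s ∧ ∀ h : 0 < k,
    ((s ⟨k - 1, by omega⟩).1 ++ [(s ⟨k - 1, by omega⟩).2]) <+: μ a

/-- The word `μ^{k-1}(m_{k-1}) · μ^{k-2}(m_{k-2}) ⋯ μ^0(m_0)` associated with a
sequence `((m_i, a_i))_{i=0,...,k-1}`. -/
def dtProd {A : Type*} (μ : A → List A) (k : ℕ) (s : Fin k → List A × A) : List A :=
  ((List.ofFn fun i : Fin k => substApp μ i.val (s i).1)).reverse.flatten

/-- A letter `c` is non-final for `μ` if `μ(d) = x · c · y` for some letter `d`,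
word `x`, and nonempty word `y`. -/
def NonFinal {A : Type*} (μ : A → List A) (c : A) : Prop :=
  ∃ (d : A) (x y : List A), y ≠ [] ∧ μ d = x ++ c :: y

/-- The Dumont–Thomas numeration system over `ℕ` associated with the substitution
`μ` and the fixed point `u` with growing seed `a` is positional with weights `U`:
whenever `|m_{k-1}| ⋯ |m_0|` is the representation of `n ≥ 1` (that is,
`((m_i,a_i))` is the unique `a`-admissible sequence with `m_{k-1} ≠ ε` and
`u_0 ⋯ u_{n-1} = μ^{k-1}(m_{k-1}) ⋯ μ^0(m_0)`), we have `n = ∑ i |m_i| · U i`. -/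
def PositionalWith {A : Type*} (μ : A → List A) (a : A) (u : ℕ → A) (U : ℕ → ℕ) : Prop :=
  ∀ n : ℕ, 1 ≤ n → ∀ (k : ℕ) (s : Fin k → List A × A),
    LetterAdmissible μ a k s →
    (∀ h : 0 < k, (s ⟨k - 1, by omega⟩).1 ≠ []) →
    List.ofFn (fun i : Fin n => u i.val) = dtProd μ k s →
    n = ∑ i : Fin k, (s i).1.length * U i.val

/-!
If `c ↦ |μ^ℓ(c)|` is constant on non-final letters, positionality is immediate: each digit `m_i`
of an `a`-admissible sequence is followed by `a_i` inside some `μ(b)`, so it consists of non-final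
letters, and `a` itself is non-final; hence `|μ^i(m_i)| = |m_i| · |μ^i(a)|`.

Conversely, positionality with weights `U` gives `|dtProd s| = ∑ |m_i| U_i` for every
`a`-admissible `s` (empty leading digits may be dropped because `μ(a)` starts with `a`). Padding
`s` at the bottom with `ℓ` empty digits upgrades this to `|μ^ℓ(dtProd s)| = ∑ |m_i| U_{i+ℓ}`. If
`μ(d) = x c y` with `y ≠ ε`, minimality makes `d` the lowest letter of some admissible sequence;
putting the digit `x`, resp. `x c`, below it gives two admissible sequences whose values differ by
`|μ^ℓ(c)|` on one side and by `U_ℓ` on the other.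
-/

lemma List.flatMap_flatten {α β : Type*} (f : α → List β) (l : List (List α)) :
    l.flatten.flatMap f = (l.map (List.flatMap f)).flatten := by
  induction l with
  | nil => rfl
  | cons v l ih => simp [List.flatMap_append, ih]

lemma List.eq_of_singleton_prefix {α : Type*} {a b : α} {w : List α} (ha : [a] <+: w)
    (hb : [b] <+: w) : b = a := by
  obtain ⟨r, rfl⟩ := ha
  obtain ⟨r', hr'⟩ := hb
  simp only [List.singleton_append, List.cons.injEq] at hr'
  exact hr'.1

section

variable {A : Type*} (μ : A → List A)

@[simp] lemma substApp_zero (w : List A) : substApp μ 0 w = w := rfl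

lemma substApp_succ (n : ℕ) (w : List A) :
    substApp μ (n + 1) w = substApp μ n (w.flatMap μ) :=
  Function.iterate_succ_apply _ _ _

lemma substApp_succ' (n : ℕ) (w : List A) :
    substApp μ (n + 1) w = (substApp μ n w).flatMap μ :=
  Function.iterate_succ_apply' _ _ _

lemma substApp_singleton_succ (n : ℕ) (c : A) :
    substApp μ (n + 1) [c] = substApp μ n (μ c) := by
  rw [substApp_succ, List.flatMap_singleton]

@[simp] lemma substApp_nil (n : ℕ) : substApp μ n ([] : List A) = [] := by
  induction n with
  | zero => rfl
  | succ n ih => rwa [substApp_succ, List.flatMap_nil]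

lemma substApp_append (n : ℕ) (v w : List A) :
    substApp μ n (v ++ w) = substApp μ n v ++ substApp μ n w := by
  induction n generalizing v w with
  | zero => rfl
  | succ n ih => simp only [substApp_succ, List.flatMap_append, ih]

lemma substApp_cons (n : ℕ) (c : A) (w : List A) :
    substApp μ n (c :: w) = substApp μ n [c] ++ substApp μ n w :=
  substApp_append μ n [c] w

lemma List.IsPrefix.substApp {v w : List A} (h : v <+: w) (n : ℕ) :
    substApp μ n v <+: substApp μ n w := by
  obtain ⟨r, rfl⟩ := h
  rw [substApp_append]
  exact List.prefix_append _ _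

lemma substApp_ne_nil (hne : ∀ c, μ c ≠ []) (n : ℕ) {w : List A} (hw : w ≠ []) :
    substApp μ n w ≠ [] := by
  induction n generalizing w with
  | zero => exact hw
  | succ n ih =>
    obtain ⟨c, w, rfl⟩ := List.exists_cons_of_ne_nil hw
    exact ih (by simp [hne c])

lemma length_substApp_of_forall_mem {n K : ℕ} {w : List A}
    (h : ∀ c ∈ w, (substApp μ n [c]).length = K) :
    (substApp μ n w).length = w.length * K := by
  induction w with
  | nil => simp
  | cons c w ih =>
    rw [substApp_cons, List.length_append, h c List.mem_cons_self,
      ih fun e he => h e (List.mem_cons_of_mem _ he), List.length_cons]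
    ring

@[simp] lemma dtProd_zero (s : Fin 0 → List A × A) : dtProd μ 0 s = [] := rfl

lemma dtProd_cons (k : ℕ) (d : List A × A) (t : Fin k → List A × A) :
    dtProd μ (k + 1) (Fin.cons d t) = (dtProd μ k t).flatMap μ ++ d.1 := by
  rw [dtProd, dtProd, List.flatMap_flatten, List.map_reverse, List.map_ofFn]
  simp [List.ofFn_succ, substApp_succ', Function.comp_def]

lemma dtProd_succ (k : ℕ) (s : Fin (k + 1) → List A × A) :
    dtProd μ (k + 1) s =
      substApp μ k (s (Fin.last k)).1 ++ dtProd μ k (fun i => s i.castSucc) := by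
  rw [dtProd, List.ofFn_succ', List.concat_eq_append, List.reverse_append]
  simp [dtProd]

lemma length_dtProd (k : ℕ) (s : Fin k → List A × A) :
    (dtProd μ k s).length = ∑ i : Fin k, (substApp μ i (s i).1).length := by
  simp [dtProd, List.sum_reverse, List.map_ofFn, List.sum_ofFn, Function.comp_def]

lemma admissible_iff (k : ℕ) (s : Fin k → List A × A) :
    Admissible μ k s ↔ ∀ (j : ℕ) (h : j + 1 < k),
      (s ⟨j, by omega⟩).1 ++ [(s ⟨j, by omega⟩).2] <+: μ (s ⟨j + 1, h⟩).2 := by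
  constructor
  · intro hs j h
    exact hs ⟨j + 1, h⟩ j.succ_pos
  · rintro hs ⟨i, hi⟩ (hpos : 0 < i)
    obtain ⟨j, rfl⟩ := Nat.exists_eq_succ_of_ne_zero hpos.ne'
    exact hs j hi

lemma letterAdmissible_cons_iff {k : ℕ} (hk : 0 < k) (a : A) (d : List A × A)
    (t : Fin k → List A × A) :
    LetterAdmissible μ a (k + 1) (Fin.cons d t) ↔
      LetterAdmissible μ a k t ∧ d.1 ++ [d.2] <+: μ (t ⟨0, hk⟩).2 := by
  obtain ⟨k, rfl⟩ := Nat.exists_eq_succ_of_ne_zero hk.ne'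
  simp only [LetterAdmissible, admissible_iff]
  constructor
  · rintro ⟨hadm, htop⟩
    refine ⟨⟨fun j h => hadm (j + 1) (by omega), fun _ => htop (by omega)⟩, ?_⟩
    simpa using hadm 0 (by omega)
  · rintro ⟨⟨hadm, htop⟩, hd⟩
    refine ⟨fun j h => ?_, fun _ => htop (by omega)⟩
    rcases j with _ | j
    · exact hd
    · exact hadm j (by omega)

lemma LetterAdmissible.castSucc {a : A} (ha : [a] <+: μ a) {k : ℕ}
    {s : Fin (k + 1) → List A × A} (hs : LetterAdmissible μ a (k + 1) s)
    (htop : (s (Fin.last k)).1 = []) :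
    LetterAdmissible μ a k (fun i => s i.castSucc) := by
  have hlast : (s (Fin.last k)).2 = a := by
    have h : (s (Fin.last k)).1 ++ [(s (Fin.last k)).2] <+: μ a := hs.2 k.succ_pos
    rw [htop, List.nil_append] at h
    exact List.eq_of_singleton_prefix ha h
  rw [LetterAdmissible, admissible_iff] at hs ⊢
  refine ⟨fun j h => hs.1 j (by omega), fun hk => ?_⟩
  have h := hs.1 (k - 1) (by omega)
  simp only [Nat.sub_add_cancel hk] at h
  rwa [← hlast]

lemma LetterAdmissible.dtProd_append_prefix {a : A} {k : ℕ} {s : Fin (k + 1) → List A × A}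
    (hs : LetterAdmissible μ a (k + 1) s) :
    dtProd μ (k + 1) s ++ [(s 0).2] <+: substApp μ (k + 1) [a] := by
  induction k with
  | zero =>
    rw [← Fin.cons_self_tail s, dtProd_cons]
    simpa [substApp_singleton_succ] using hs.2 one_pos
  | succ k ih =>
    rw [← Fin.cons_self_tail s, letterAdmissible_cons_iff μ k.succ_pos] at hs
    rw [← Fin.cons_self_tail s, dtProd_cons, substApp_succ', List.append_assoc]
    calc (dtProd μ (k + 1) (Fin.tail s)).flatMap μ ++ ((s 0).1 ++ [(s 0).2])
        <+: (dtProd μ (k + 1) (Fin.tail s)).flatMap μ ++ μ (Fin.tail s 0).2 :=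
          (List.prefix_append_right_inj _).2 hs.2
      _ = (dtProd μ (k + 1) (Fin.tail s) ++ [(Fin.tail s 0).2]).flatMap μ := by simp
      _ <+: (substApp μ (k + 1) [a]).flatMap μ := (ih hs.1).flatMap μ

lemma nonFinal_of_mem_of_prefix {w : List A} {c d : A} (h : w ++ [c] <+: μ d) {e : A}
    (he : e ∈ w) : NonFinal μ e := by
  obtain ⟨x, y, rfl⟩ := List.append_of_mem he
  obtain ⟨r, hr⟩ := h
  exact ⟨d, x, y ++ c :: r, by simp, by simp [← hr]⟩

lemma LetterAdmissible.nonFinal_of_mem {a : A} {k : ℕ} {s : Fin k → List A × A}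
    (hs : LetterAdmissible μ a k s) (i : Fin k) {e : A} (he : e ∈ (s i).1) : NonFinal μ e := by
  rw [LetterAdmissible, admissible_iff] at hs
  by_cases hi : i.val + 1 < k
  · exact nonFinal_of_mem_of_prefix μ (hs.1 i hi) he
  · have hik : i = ⟨k - 1, by omega⟩ := Fin.ext (show i.val = k - 1 by omega)
    rw [hik] at he
    exact nonFinal_of_mem_of_prefix μ (hs.2 (by omega)) he

lemma exists_letterAdmissible_of_mem {a : A} (p : ℕ) {d : A}
    (hd : d ∈ substApp μ (p + 1) [a]) :
    ∃ (k : ℕ) (t : Fin (k + 1) → List A × A), LetterAdmissible μ a (k + 1) t ∧ (t 0).2 = d := by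
  induction p generalizing d with
  | zero =>
    rw [substApp_singleton_succ, substApp_zero] at hd
    obtain ⟨x, y, hxy⟩ := List.append_of_mem hd
    refine ⟨0, fun _ => (x, d), ⟨(admissible_iff μ _ _).2 fun j h => by omega, fun _ => ?_⟩, rfl⟩
    exact ⟨y, by simp [hxy]⟩
  | succ p ih =>
    rw [substApp_succ', List.mem_flatMap] at hd
    obtain ⟨e, he, hde⟩ := hd
    obtain ⟨k, t, ht, hte⟩ := ih he
    obtain ⟨x, y, hxy⟩ := List.append_of_mem hde
    refine ⟨k + 1, Fin.cons (x, d) t, (letterAdmissible_cons_iff μ k.succ_pos a _ _).2 ⟨ht, ?_⟩,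
      rfl⟩
    exact ⟨y, by simp [hte, hxy]⟩

section FixedPoint

variable {a : A} {u : ℕ → A}

lemma ofFn_eq_of_isPrefix
    (hu : ∀ n : ℕ,
      List.ofFn (fun i : Fin (substApp μ n [a]).length => u i.val) = substApp μ n [a])
    {n : ℕ} {w : List A} (hw : w <+: substApp μ n [a]) :
    List.ofFn (fun i : Fin w.length => u i.val) = w := by
  refine List.ext_getElem (by simp) fun i _ hi => ?_
  rw [List.getElem_ofFn, hw.getElem hi]
  exact ((List.getElem_of_eq (hu n) (by simpa using hw.length_le.trans_lt' hi)).symm.trans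
    (List.getElem_ofFn _)).symm

lemma exists_eq_cons_of_fixedPoint (hne : ∀ c, μ c ≠ [])
    (hu : ∀ n : ℕ,
      List.ofFn (fun i : Fin (substApp μ n [a]).length => u i.val) = substApp μ n [a]) :
    ∃ ta, μ a = a :: ta := by
  obtain ⟨b, ta, hb⟩ := List.exists_cons_of_ne_nil (hne a)
  have hu0 : [u 0] = [a] := hu 0
  have hub : [u 0] = [b] :=
    ofFn_eq_of_isPrefix μ hu (n := 1) (w := [b]) (by simp [substApp_singleton_succ, hb])
  exact ⟨ta, by rw [hb, ← List.singleton_inj.1 (hub.symm.trans hu0)]⟩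

end FixedPoint

section Positional

variable {a : A} {u : ℕ → A} {U : ℕ → ℕ}

lemma PositionalWith.length_dtProd (hne : ∀ c, μ c ≠ []) (ha : [a] <+: μ a)
    (hu : ∀ n : ℕ,
      List.ofFn (fun i : Fin (substApp μ n [a]).length => u i.val) = substApp μ n [a])
    (hpos : PositionalWith μ a u U) {k : ℕ} {s : Fin k → List A × A}
    (hs : LetterAdmissible μ a k s) :
    (dtProd μ k s).length = ∑ i : Fin k, (s i).1.length * U i := by
  induction k with
  | zero => simp
  | succ k ih =>
    by_cases htop : (s (Fin.last k)).1 = []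
    · rw [dtProd_succ, htop, substApp_nil, List.nil_append, ih (hs.castSucc μ ha htop),
        Fin.sum_univ_castSucc, htop]
      simp
    · have hlen : 1 ≤ (dtProd μ (k + 1) s).length := by
        rw [dtProd_succ, List.length_append, Nat.one_le_iff_ne_zero]
        simp [substApp_ne_nil μ hne k htop]
      exact hpos _ hlen _ s hs (fun _ => htop)
        (ofFn_eq_of_isPrefix μ hu ((List.prefix_append _ _).trans (hs.dtProd_append_prefix μ)))

lemma PositionalWith.length_substApp_dtProd (hne : ∀ c, μ c ≠ []) (ha : [a] <+: μ a)
    (hu : ∀ n : ℕ,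
      List.ofFn (fun i : Fin (substApp μ n [a]).length => u i.val) = substApp μ n [a])
    (hpos : PositionalWith μ a u U) (ℓ : ℕ) {k : ℕ} {s : Fin (k + 1) → List A × A}
    (hs : LetterAdmissible μ a (k + 1) s) :
    (substApp μ ℓ (dtProd μ (k + 1) s)).length =
      ∑ i : Fin (k + 1), (s i).1.length * U (i + ℓ) := by
  induction ℓ generalizing k with
  | zero => simpa using hpos.length_dtProd μ hne ha hu hs
  | succ ℓ ih =>
    have hpad : LetterAdmissible μ a (k + 2) (Fin.cons ([], (μ (s 0).2).head (hne _)) s) :=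
      (letterAdmissible_cons_iff μ k.succ_pos a _ _).2
        ⟨hs, ⟨(μ (s 0).2).tail, by simp⟩⟩
    have h := ih hpad
    rw [dtProd_cons, List.append_nil, ← substApp_succ, Fin.sum_univ_succ] at h
    simpa [add_assoc, add_comm 1] using h

lemma PositionalWith.length_substApp_of_nonFinal (hne : ∀ c, μ c ≠ []) (ha : [a] <+: μ a)
    (hu : ∀ n : ℕ,
      List.ofFn (fun i : Fin (substApp μ n [a]).length => u i.val) = substApp μ n [a])
    (hmin : ∀ c : A, ∃ n, c ∈ substApp μ n [a])
    (hpos : PositionalWith μ a u U) (ℓ : ℕ) {c : A} (hc : NonFinal μ c) :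
    (substApp μ ℓ [c]).length = U ℓ := by
  obtain ⟨d, x, y, hy, hd⟩ := hc
  obtain ⟨n, hn⟩ := hmin d
  have hn' : d ∈ substApp μ (n + 1) [a] := by
    rw [substApp_singleton_succ]
    exact (ha.substApp μ n).subset hn
  obtain ⟨k, t, ht, htd⟩ := exists_letterAdmissible_of_mem μ n hn'
  have hadm : ∀ w e, w ++ [e] <+: μ d → LetterAdmissible μ a (k + 2) (Fin.cons (w, e) t) :=
    fun w e h => (letterAdmissible_cons_iff μ k.succ_pos a _ _).2 ⟨ht, htd ▸ h⟩
  have h₁ := hpos.length_substApp_dtProd μ hne ha hu ℓ (hadm x c ⟨y, by simp [hd]⟩)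
  have h₂ := hpos.length_substApp_dtProd μ hne ha hu ℓ
    (hadm (x ++ [c]) (y.head hy) ⟨y.tail, by simp [hd]⟩)
  simp only [dtProd_cons, substApp_append, List.length_append, Fin.sum_univ_succ,
    Fin.cons_zero, Fin.cons_succ, Fin.val_zero, zero_add, List.length_singleton,
    add_mul, one_mul] at h₁ h₂
  omega

end Positional

lemma positionalWith_of_length_eq {a : A} {u : ℕ → A} (ha : NonFinal μ a)
    (hconst : ∀ (ℓ : ℕ) (c c' : A), NonFinal μ c → NonFinal μ c' →
      (substApp μ ℓ [c]).length = (substApp μ ℓ [c']).length) :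
    PositionalWith μ a u (fun ℓ => (substApp μ ℓ [a]).length) := by
  intro n _ k s hs _ hn
  rw [show n = (dtProd μ k s).length by simpa using congrArg List.length hn, length_dtProd]
  exact Finset.sum_congr rfl fun i _ =>
    length_substApp_of_forall_mem μ fun e he => hconst i e a (hs.nonFinal_of_mem μ i he) ha

end

/-- Corollary 3.9: for a substitution `μ` with right-infinite fixed point `u` with
growing seed `a` (and minimal alphabet), the associated Dumont–Thomas numeration
system over `ℕ` is positional iff `c ↦ |μ^ℓ(c)|` is constant over the non-final
letters for every `ℓ`; in that case the weights are `U ℓ = |μ^ℓ(a)|`. -/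
theorem stmt12 {A : Type*} (μ : A → List A) (hne : ∀ c, μ c ≠ []) (a : A)
    (hgrow : ∀ N : ℕ, ∃ n, N ≤ (substApp μ n [a]).length)
    (u : ℕ → A)
    (hu : ∀ n : ℕ,
        List.ofFn (fun i : Fin (substApp μ n [a]).length => u i.val) = substApp μ n [a])
    (hmin : ∀ c : A, ∃ n, c ∈ substApp μ n [a]) :
    ((∃ U : ℕ → ℕ, PositionalWith μ a u U) ↔
      (∀ (ℓ : ℕ) (c c' : A), NonFinal μ c → NonFinal μ c' →
        (substApp μ ℓ [c]).length = (substApp μ ℓ [c']).length)) ∧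
    ((∀ (ℓ : ℕ) (c c' : A), NonFinal μ c → NonFinal μ c' →
        (substApp μ ℓ [c]).length = (substApp μ ℓ [c']).length) →
      PositionalWith μ a u (fun ℓ => (substApp μ ℓ [a]).length)) := by
  obtain ⟨ta, hμa⟩ := exists_eq_cons_of_fixedPoint μ hne hu
  have hta : ta ≠ [] := by
    rintro rfl
    have hfix : ∀ n, substApp μ n [a] = [a] := fun n => by
      induction n with
      | zero => rfl
      | succ n ih => rw [substApp_singleton_succ, hμa, ih]
    obtain ⟨n, hn⟩ := hgrow 2
    simp [hfix n] at hn
  have ha : [a] <+: μ a := ⟨ta, hμa.symm⟩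
  have hconst_pos := fun hconst => positionalWith_of_length_eq μ (u := u) ⟨a, [], ta, hta, hμa⟩ hconst
  refine ⟨⟨fun ⟨U, hU⟩ ℓ c c' hc hc' => ?_, fun hconst => ⟨_, hconst_pos hconst⟩⟩, hconst_pos⟩
  rw [hU.length_substApp_of_nonFinal μ hne ha hu hmin ℓ hc,
    hU.length_substApp_of_nonFinal μ hne ha hu hmin ℓ hc']
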